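/- Let (X,θ) be an S-set and (j, Z, ω) a globalization of (X,θ). Let σ : E → Z be the mediating S-function given by the universal property of the constructed globalization (i, E, η), i.e., σ([s,x]) = ω_s(j(x)). Then for each object u of S, σ is injective on E_u, where E_u is the image in E of D_u = {(s,x) ∈ D : c(s) = u}. -/

import Mathlib

structure InvSgpd (S : Type*) (O : Type*) where
  d : S → O
  c : S → O
  mul : S → S → S
  d_mul : ∀ s t, d s = c t → d (mul s t) = d t
  c_mul : ∀ s t, d s = c t → c (mul s t) = c s
  assoc : ∀ p s t, d p = c s → d s = c t → mul (mul p s) t = mul p (mul s t)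
  inv : S → S
  comp_inv : ∀ s, d s = c (inv s)
  inv_comp : ∀ s, d (inv s) = c s
  mul_inv_mul : ∀ s, mul (mul s (inv s)) s = s
  inv_mul_inv : ∀ s, mul (mul (inv s) s) (inv s) = inv s
  inv_unique : ∀ s t, d s = c t → d t = c s →
    mul (mul s t) s = s → mul (mul t s) t = t → t = inv s

namespace InvSgpd
variable {S O : Type*} (G : InvSgpd S O)
def Composable (s t : S) : Prop := G.d s = G.c t
def Idem (e : S) : Prop := G.Composable e e ∧ G.mul e e = e
def le (s t : S) : Prop :=
  G.d s = G.d t ∧ G.c s = G.c t ∧ s = G.mul t (G.mul (G.inv s) s)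
end InvSgpd

/-- A partial action of an inverse semigroupoid `G` on a set (type) `X`:
`dom s` plays the role of `X_s` and `act s` the role of `θ_s : X_{s*} → X_s`
(as a total map whose values are only relevant on `dom (G.inv s)`). -/
structure PAction {S O : Type*} (G : InvSgpd S O) (X : Type*) where
  dom : S → Set X
  act : S → X → X
  maps : ∀ s, ∀ x ∈ dom (G.inv s), act s x ∈ dom s
  /-- (P1) `θ_e = id_{X_e}` for idempotents. -/
  idem_id : ∀ e, G.Idem e → ∀ x ∈ dom e, act e x = x
  /-- (P1) every point lies in some `X_e` with `e` idempotent. -/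
  cover : ∀ x : X, ∃ e, G.Idem e ∧ x ∈ dom e
  /-- (P2) `X_s ⊆ X_{ss*}`. -/
  dom_mono : ∀ s, dom s ⊆ dom (G.mul s (G.inv s))
  /-- (P3) `θ_t⁻¹(X_t ∩ X_{s*}) = X_{(st)*} ∩ X_{t*}` for composable `(s,t)`. -/
  preimage_eq : ∀ s t, G.Composable s t →
    {x | x ∈ dom (G.inv t) ∧ act t x ∈ dom t ∩ dom (G.inv s)}
      = dom (G.inv (G.mul s t)) ∩ dom (G.inv t)
  /-- (P3) `θ_s (θ_t x) = θ_{st} x` on `X_{(st)*} ∩ X_{t*}`. -/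
  mul_act : ∀ s t, G.Composable s t →
    ∀ x ∈ dom (G.inv (G.mul s t)) ∩ dom (G.inv t),
      act s (act t x) = act (G.mul s t) x

namespace PAction
variable {S O X : Type*} {G : InvSgpd S O}

/-- A partial action is global when `X_s = X_{ss*}` for every `s`. -/
def IsGlobal (θ : PAction G X) : Prop := ∀ s, θ.dom s = θ.dom (G.mul s (G.inv s))

end PAction

namespace PAction
variable {S O X : Type*} {G : InvSgpd S O} (θ : PAction G X)

/-- The set `D = {(s,x) ∈ S × X : x ∈ X_{s*s}}`. -/
def Dset : Type _ := {p : S × X // p.2 ∈ θ.dom (G.mul (G.inv p.1) p.1)}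

/-- The relation `∼` on `D`: `(s,x) ∼ (t,y)` iff
(R1) `(t*,s)` is composable, `x ∈ X_{s*t}` and `θ_{t*s}(x) = y`, or
(R2) `s` and `t` are idempotents and `x = y`. -/
def rel (p q : θ.Dset) : Prop :=
  (G.Composable (G.inv q.1.1) p.1.1 ∧
      p.1.2 ∈ θ.dom (G.mul (G.inv p.1.1) q.1.1) ∧
      θ.act (G.mul (G.inv q.1.1) p.1.1) p.1.2 = q.1.2) ∨
    (G.Idem p.1.1 ∧ G.Idem q.1.1 ∧ p.1.2 = q.1.2)

end PAction

namespace PAction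
variable {S O X : Type*} {G : InvSgpd S O} (θ : PAction G X)

/-- The equivalence relation `≈` on `D` generated by `∼`. -/
def relSetoid : Setoid θ.Dset :=
  ⟨Relation.EqvGen θ.rel, Relation.EqvGen.is_equivalence _⟩

/-- `E = D/≈`, the carrier of the constructed globalization. -/
def Env : Type _ := Quotient θ.relSetoid

/-- `E_s`: the image under the quotient map of
`D_s = {(p,x) ∈ D : (s*,p) composable, x ∈ X_{p* s s* p}}`. -/
def Eset (s : S) : Set θ.Env :=
  {c | ∃ p : θ.Dset, Quotient.mk θ.relSetoid p = c ∧
    G.Composable (G.inv s) p.1.1 ∧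
    p.1.2 ∈ θ.dom (G.mul (G.inv p.1.1) (G.mul (G.mul s (G.inv s)) p.1.1))}

end PAction

/-!
Write `r = t*s`. Since `c(s) = c(t)`, the pair `(t*, s)` is composable, and in the global
action `ω` the equation `ω_s(j x) = ω_t(j y)` forces `j x ∈ Z_{r*}` and `ω_r(j x) = j y`;
symmetrically `ω_{s*t}(j y) = j x`. The embedding condition `X_s = j⁻¹(ω_s(j(X) ∩ Z_{s*}))`
pulls these back to `x ∈ X_{r*} ∩ X_{s*t}` and `θ_r(x) = y`, which is exactly the generating
relation `(s, x) ∼ (t, y)`.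
-/

namespace InvSgpd
variable {S O : Type*} (G : InvSgpd S O)

theorem inv_inv (s : S) : G.inv (G.inv s) = s :=
  (G.inv_unique (G.inv s) s (G.inv_comp s) (G.comp_inv s)
    (G.inv_mul_inv s) (G.mul_inv_mul s)).symm

theorem composable_inv_left_iff {s t : S} : G.Composable (G.inv t) s ↔ G.c t = G.c s := by
  rw [Composable, inv_comp]

theorem idem_inv_mul_self (s : S) : G.Idem (G.mul (G.inv s) s) := by
  refine ⟨?_, ?_⟩
  · rw [Composable, G.d_mul _ _ (G.inv_comp s), G.c_mul _ _ (G.inv_comp s), G.comp_inv]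
  · have hcomp : G.d (G.mul (G.inv s) s) = G.c (G.inv s) := by
      rw [G.d_mul _ _ (G.inv_comp s), G.comp_inv]
    rw [← G.assoc _ _ _ hcomp (G.inv_comp s), G.inv_mul_inv]

variable {G}

theorem Idem.inv_eq {e : S} (he : G.Idem e) : G.inv e = e :=
  (G.inv_unique e e he.1 he.1 (by rw [he.2, he.2]) (by rw [he.2, he.2])).symm

end InvSgpd

namespace PAction
variable {S O X Z : Type*} {G : InvSgpd S O}

theorem IsGlobal.dom_inv_eq {ω : PAction G Z} (hω : ω.IsGlobal) (s : S) :
    ω.dom (G.inv s) = ω.dom (G.mul (G.inv s) s) := by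
  rw [hω, G.inv_inv]

theorem mem_dom_inv_mul_self (θ : PAction G X) {s : S} {x : X} (hx : x ∈ θ.dom (G.inv s)) :
    x ∈ θ.dom (G.mul (G.inv s) s) := by
  simpa only [G.inv_inv] using θ.dom_mono (G.inv s) hx

theorem act_inv_act (θ : PAction G X) {s : S} {x : X} (hx : x ∈ θ.dom (G.inv s)) :
    θ.act (G.inv s) (θ.act s x) = x := by
  have he := G.idem_inv_mul_self s
  have hx' := θ.mem_dom_inv_mul_self hx
  rw [θ.mul_act _ _ (G.inv_comp s) x ⟨by rwa [he.inv_eq], hx⟩, θ.idem_id _ he x hx']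

theorem mem_dom_inv_mul_of_act_eq (θ : PAction G X) {s t : S} {x y : X}
    (hts : G.Composable (G.inv t) s) (hx : x ∈ θ.dom (G.inv s)) (hy : y ∈ θ.dom (G.inv t))
    (h : θ.act s x = θ.act t y) : x ∈ θ.dom (G.inv (G.mul (G.inv t) s)) := by
  have hmem : x ∈ {z | z ∈ θ.dom (G.inv s) ∧ θ.act s z ∈ θ.dom s ∩ θ.dom (G.inv (G.inv t))} :=
    ⟨hx, θ.maps s x hx, by rw [G.inv_inv, h]; exact θ.maps t y hy⟩
  exact (θ.preimage_eq _ _ hts ▸ hmem).1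

theorem act_inv_mul_of_act_eq (θ : PAction G X) {s t : S} {x y : X}
    (hts : G.Composable (G.inv t) s) (hx : x ∈ θ.dom (G.inv s)) (hy : y ∈ θ.dom (G.inv t))
    (h : θ.act s x = θ.act t y) : θ.act (G.mul (G.inv t) s) x = y := by
  rw [← θ.mul_act _ _ hts x ⟨θ.mem_dom_inv_mul_of_act_eq hts hx hy h, hx⟩, h, θ.act_inv_act hy]

theorem mem_dom_of_act_eq_of_embedding {θ : PAction G X} {ω : PAction G Z} {j : X → Z}
    (hj_emb : ∀ s, θ.dom s = j ⁻¹' (ω.act s '' (Set.range j ∩ ω.dom (G.inv s))))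
    {r : S} {x y : X} (hy : j y ∈ ω.dom (G.inv r)) (h : ω.act r (j y) = j x) :
    x ∈ θ.dom r := by
  rw [hj_emb]
  exact ⟨j y, ⟨⟨y, rfl⟩, hy⟩, h⟩

end PAction

/-- Let `(j, Z, ω)` be a globalization of `(X, θ)` (so `ω` is global, `j` is an
injective `S`-function with `X_s = j⁻¹(ω_s(j(X) ∩ Z_{s*}))`).  The mediating
`S`-function `σ : E → Z`, `σ([s,x]) = ω_s(j(x))`, given by the universal
property of the constructed globalization, is injective on each `E_u`,
`u ∈ S⁰`: if two classes have representatives `(s,x)`, `(t,y)` with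
`c(s) = c(t) = u` and equal `σ`-values, the classes coincide. -/
theorem mediating_injOn {S O X Z : Type*} (G : InvSgpd S O)
    (θ : PAction G X) (ω : PAction G Z) (hglob : ω.IsGlobal) (j : X → Z)
    (hj_dom : ∀ s, ∀ x ∈ θ.dom s, j x ∈ ω.dom s)
    (hj_act : ∀ s, ∀ x ∈ θ.dom (G.inv s), j (θ.act s x) = ω.act s (j x))
    (hj_inj : Function.Injective j)
    (hj_emb : ∀ s, θ.dom s
      = j ⁻¹' (ω.act s '' (Set.range j ∩ ω.dom (G.inv s))))
    (u : O) (p q : θ.Dset)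
    (hpu : G.c p.1.1 = u) (hqu : G.c q.1.1 = u)
    (hσ : ω.act p.1.1 (j p.1.2) = ω.act q.1.1 (j q.1.2)) :
    Quotient.mk θ.relSetoid p = Quotient.mk θ.relSetoid q := by
  obtain ⟨⟨s, x⟩, hx⟩ := p
  obtain ⟨⟨t, y⟩, hy⟩ := q
  dsimp only at hx hy hpu hqu hσ ⊢
  have hts : G.Composable (G.inv t) s := G.composable_inv_left_iff.2 (hqu.trans hpu.symm)
  have hst : G.Composable (G.inv s) t := G.composable_inv_left_iff.2 (hpu.trans hqu.symm)
  have hjx : j x ∈ ω.dom (G.inv s) := hglob.dom_inv_eq s ▸ hj_dom _ _ hx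
  have hjy : j y ∈ ω.dom (G.inv t) := hglob.dom_inv_eq t ▸ hj_dom _ _ hy
  have hjx_dom := ω.mem_dom_inv_mul_of_act_eq hts hjx hjy hσ
  have hjx_act := ω.act_inv_mul_of_act_eq hts hjx hjy hσ
  have hx_dom : x ∈ θ.dom (G.inv (G.mul (G.inv t) s)) :=
    PAction.mem_dom_of_act_eq_of_embedding hj_emb
      (by rw [G.inv_inv, ← hjx_act]; exact ω.maps _ _ hjx_dom)
      (by rw [← hjx_act, ω.act_inv_act hjx_dom])
  refine Quot.sound (.rel _ _ (Or.inl ⟨hts, ?_, hj_inj ?_⟩))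
  · exact PAction.mem_dom_of_act_eq_of_embedding hj_emb
      (ω.mem_dom_inv_mul_of_act_eq hst hjy hjx hσ.symm)
      (ω.act_inv_mul_of_act_eq hst hjy hjx hσ.symm)
  · rw [hj_act _ _ hx_dom, hjx_act]
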